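/- arXiv:1303.1840 — 6 statements merged into one kernel-verified Lean document; each statement's English description precedes it below -/
import Mathlib

section
/- For every integer k ≥ 3, the family ℛ_k = { {i, i+1 mod k} : i ∈ ℤ/kℤ } of rows of Tucker's matrix M_I of order k is a minimal non-C1P matrix: it does not have the consecutive-ones property, but every proper restriction (deleting at least one row or at least one column) has the consecutive-ones property. -/
/-!
Whatever the ordering, the leftmost column `m` lies in the rows `{m - 1, m}` and `{m, m + 1}`;
the interval from `m` to the farther of `m - 1`, `m + 1` contains the nearer one, which is
impossible since `m - 1`, `m`, `m + 1` are distinct for `k ≥ 3`. A proper restriction misses some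
row `{d - 1, d}` or some column `d`; numbering the columns `d, d + 1, …, d - 1` unrolls the cycle
into a path broken exactly there, on which every remaining row is an interval.
-/

/-- Two sets *overlap* if they intersect but neither is a subset of the other. -/
def Overlaps {α : Type*} [DecidableEq α] (A B : Finset α) : Prop :=
  (A ∩ B).Nonempty ∧ ¬ A ⊆ B ∧ ¬ B ⊆ A

instance {α : Type*} [DecidableEq α] (A B : Finset α) : Decidable (Overlaps A B) :=
  inferInstanceAs (Decidable (_ ∧ _ ∧ _))

/-- The overlap graph of a family of sets. -/
def overlapGraph {α : Type*} [DecidableEq α] (𝓡 : Finset (Finset α)) :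
    SimpleGraph {R // R ∈ 𝓡} where
  Adj A B := Overlaps A.1 B.1
  symm := by
    constructor
    rintro A B ⟨h1, h2, h3⟩
    exact ⟨by rwa [Finset.inter_comm], h3, h2⟩
  loopless := ⟨fun A h => h.2.1 le_rfl⟩

/-- A set `S` is *convex* (occupies consecutive positions) within the column set `U`
under the position assignment `σ`. -/
def ConvexIn {α : Type*} (U : Finset α) (σ : α → ℕ) (S : Set α) : Prop :=
  ∀ x ∈ U, ∀ y ∈ U, ∀ z ∈ U, σ x ≤ σ y → σ y ≤ σ z → x ∈ S → z ∈ S → y ∈ S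

/-- `σ` is a consecutive-ones ordering of the columns `U` for the family `𝓡`:
it linearly orders `U` (injectivity) and every member of `𝓡` is an interval of it. -/
def IsC1POrdering {α : Type*} (U : Finset α) (𝓡 : Finset (Finset α)) (σ : α → ℕ) : Prop :=
  Set.InjOn σ U ∧ ∀ R ∈ 𝓡, ConvexIn U σ (R : Set α)

/-- The family `𝓡` of subsets of the column set `U` has the consecutive-ones property. -/
def HasC1P {α : Type*} (U : Finset α) (𝓡 : Finset (Finset α)) : Prop :=
  ∃ σ : α → ℕ, IsC1POrdering U 𝓡 σ

/-- `𝓡` is a minimal non-C1P matrix (Tucker matrix) over column set `U`. -/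
def MinimalNonC1P {α : Type*} [DecidableEq α] (U : Finset α) (𝓡 : Finset (Finset α)) : Prop :=
  (∀ R ∈ 𝓡, R ⊆ U) ∧ ¬ HasC1P U 𝓡 ∧
    ∀ 𝓡' ⊆ 𝓡, ∀ U' ⊆ U, (𝓡' ≠ 𝓡 ∨ U' ≠ U) →
      HasC1P U' (𝓡'.image (· ∩ U'))

section ConvexIn

variable {α : Type*} {U : Finset α} {σ : α → ℕ}

lemma convexIn_of_forall_le_add_one {S : Set α} (hσ : Set.InjOn σ U)
    (hS : ∀ x ∈ U, ∀ z ∈ U, x ∈ S → z ∈ S → σ z ≤ σ x + 1) : ConvexIn U σ S := by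
  intro x hx y hy z hz hxy hyz hxS hzS
  have := hS x hx z hz hxS hzS
  obtain h | h : σ y = σ x ∨ σ y = σ z := by omega
  · rwa [hσ hy hx h]
  · rwa [hσ hy hz h]

lemma eq_of_convexIn_pair_of_le {m a b : α} (hm : m ∈ U) (ha : a ∈ U) (hb : b ∈ U)
    (hma : σ m ≤ σ a) (hmb : σ m ≤ σ b) (ham : a ≠ m) (hbm : b ≠ m)
    (hconv_a : ConvexIn U σ {m, a}) (hconv_b : ConvexIn U σ {m, b}) : a = b := by
  rcases le_total (σ a) (σ b) with h | h
  · simpa [ham] using hconv_b m hm a ha b hb hma h (by simp) (by simp)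
  · exact (by simpa [hbm] using hconv_a m hm b hb a ha hmb h (by simp) (by simp) : b = a).symm

end ConvexIn

namespace ZMod

variable {k : ℕ}

lemma natCast_ne_zero_of_lt {n : ℕ} (hn : 0 < n) (hnk : n < k) : (n : ZMod k) ≠ 0 := by
  rw [Ne, natCast_eq_zero_iff]
  exact Nat.not_dvd_of_pos_of_lt hn hnk

lemma val_add_one_of_add_one_ne_zero [NeZero k] {a : ZMod k} (h : a + 1 ≠ 0) :
    (a + 1).val = a.val + 1 := by
  rcases eq_or_ne k 1 with rfl | hk
  · exact absurd (Subsingleton.elim _ _) h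
  rw [← val_one'' hk]
  refine val_add_of_lt (not_le.mp fun hle => h ?_)
  have := val_add_val_of_le hle
  have := val_lt a
  rw [val_one'' hk] at *
  rw [← val_eq_zero]
  omega

end ZMod

def cycleEdges (k : ℕ) [NeZero k] : Finset (Finset (ZMod k)) :=
  Finset.univ.image fun i => {i, i + 1}

section Cycle

variable {k : ℕ} [NeZero k]

theorem not_hasC1P_cycleEdges (hk : 3 ≤ k) : ¬ HasC1P Finset.univ (cycleEdges k) := by
  rintro ⟨σ, -, hconv⟩
  obtain ⟨m, -, hm⟩ := Finset.exists_min_image Finset.univ σ Finset.univ_nonempty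
  have hedge (i : ZMod k) : ConvexIn Finset.univ σ {i, i + 1} := by
    simpa using hconv _ (Finset.mem_image_of_mem _ (Finset.mem_univ i))
  have h1 : (1 : ZMod k) ≠ 0 := by exact_mod_cast ZMod.natCast_ne_zero_of_lt one_pos (by omega)
  have h2 : (2 : ZMod k) ≠ 0 := by exact_mod_cast ZMod.natCast_ne_zero_of_lt two_pos (by omega)
  refine h2 ?_
  have := eq_of_convexIn_pair_of_le (Finset.mem_univ m) (Finset.mem_univ (m - 1))
    (Finset.mem_univ (m + 1)) (hm _ (Finset.mem_univ _)) (hm _ (Finset.mem_univ _))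
    (by simpa using h1) (by simpa using h1)
    (by simpa [Set.pair_comm] using hedge (m - 1)) (hedge m)
  linear_combination -this

theorem hasC1P_of_forall_subset_edge (d : ZMod k) {U : Finset (ZMod k)}
    {𝓢 : Finset (Finset (ZMod k))}
    (h𝓢 : ∀ S ∈ 𝓢, ∃ i, S ⊆ {i, i + 1} ∧ ({i, i + 1} ⊆ S → i + 1 ≠ d)) : HasC1P U 𝓢 := by
  have hinj : Function.Injective fun x : ZMod k => (x - d).val :=
    (ZMod.val_injective k).comp (sub_left_injective (b := d))
  refine ⟨fun x => (x - d).val, hinj.injOn, fun S hS => ?_⟩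
  obtain ⟨i, hSi, hcut⟩ := h𝓢 S hS
  refine convexIn_of_forall_le_add_one hinj.injOn fun x _ z _ hx hz => ?_
  have hstep (hi : i ∈ S) (hi1 : i + 1 ∈ S) : (i + 1 - d).val = (i - d).val + 1 := by
    rw [add_sub_right_comm, ZMod.val_add_one_of_add_one_ne_zero]
    rw [← add_sub_right_comm, sub_ne_zero]
    exact hcut (Finset.insert_subset hi (Finset.singleton_subset_iff.mpr hi1))
  have hx' := hSi hx
  have hz' := hSi hz
  simp only [Finset.mem_insert, Finset.mem_singleton] at hx' hz'
  rcases hx' with rfl | rfl <;> rcases hz' with rfl | rfl <;>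
    first | omega | (have := hstep hx hz; omega) | (have := hstep hz hx; omega)

theorem hasC1P_restriction_of_cut {𝓡' : Finset (Finset (ZMod k))} (h𝓡' : 𝓡' ⊆ cycleEdges k)
    {U' : Finset (ZMod k)} (d : ZMod k)
    (hd : ∀ i, {i, i + 1} ∈ 𝓡' → {i, i + 1} ⊆ U' → i + 1 ≠ d) :
    HasC1P U' (𝓡'.image (· ∩ U')) := by
  refine hasC1P_of_forall_subset_edge d ?_
  intro S hS
  obtain ⟨R, hR, rfl⟩ := Finset.mem_image.mp hS
  obtain ⟨i, -, rfl⟩ := Finset.mem_image.mp (h𝓡' hR)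
  exact ⟨i, Finset.inter_subset_left, fun hsub => hd i hR (hsub.trans Finset.inter_subset_right)⟩

theorem hasC1P_of_proper_restriction {𝓡' : Finset (Finset (ZMod k))} (h𝓡' : 𝓡' ⊆ cycleEdges k)
    {U' : Finset (ZMod k)} (hproper : 𝓡' ≠ cycleEdges k ∨ U' ≠ Finset.univ) :
    HasC1P U' (𝓡'.image (· ∩ U')) := by
  rcases eq_or_ne U' Finset.univ with rfl | hU
  · obtain ⟨R, hR, hR'⟩ := Finset.exists_of_ssubset
      (h𝓡'.ssubset_of_ne (hproper.resolve_right (not_not_intro rfl)))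
    obtain ⟨j, -, rfl⟩ := Finset.mem_image.mp hR
    refine hasC1P_restriction_of_cut h𝓡' (j + 1) fun i hi _ hij => hR' ?_
    rwa [← add_right_cancel hij]
  · obtain ⟨c, hc⟩ := not_forall.mp (mt Finset.eq_univ_iff_forall.mpr hU)
    exact hasC1P_restriction_of_cut h𝓡' c fun i _ hsub hic => hc (hic ▸ hsub (by simp))

end Cycle

/-- For `k ≥ 3`, the family `ℛ_k = { {i, i+1} : i ∈ ℤ/kℤ }` of rows of
Tucker's matrix `M_I` of order `k`, over the column set `ℤ/kℤ`, is a minimal non-C1P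
matrix: it fails the consecutive-ones property but every proper restriction has it. -/
theorem MI_minimalNonC1P (k : ℕ) [NeZero k] (hk : 3 ≤ k) :
    MinimalNonC1P (Finset.univ : Finset (ZMod k))
      ((Finset.univ : Finset (ZMod k)).image (fun i => ({i, i + 1} : Finset (ZMod k)))) :=
  ⟨fun R _ => Finset.subset_univ R, not_hasC1P_cycleEdges hk,
    fun _ h𝓡' _ _ hproper => hasC1P_of_proper_restriction h𝓡' hproper⟩
end

section
/- Let ℛ be a finite family of subsets of a finite column set U that has the consecutive-ones property, let σ be any consecutive-ones ordering of U for ℛ, and let 𝒞 be a connected component of the overlap graph of ℛ. Then every constrained Venn class of 𝒞 occupies a set of consecutive positions under σ. -/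
/-- The row `R` is a member of the connected component `𝒞` of the overlap graph of `𝓡`. -/
def InComponent {α : Type*} [DecidableEq α] (𝓡 : Finset (Finset α))
    (𝒞 : (overlapGraph 𝓡).ConnectedComponent) (R : {R // R ∈ 𝓡}) : Prop :=
  (overlapGraph 𝓡).connectedComponentMk R = 𝒞

/-- Columns `x` and `y` lie in the same Venn class of the component `𝒞`:
they belong to exactly the same members of `𝒞`. -/
def SameVennClass {α : Type*} [DecidableEq α] (𝓡 : Finset (Finset α))
    (𝒞 : (overlapGraph 𝓡).ConnectedComponent) (x y : α) : Prop :=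
  ∀ R, InComponent 𝓡 𝒞 R → (x ∈ R.1 ↔ y ∈ R.1)

/-- The column `x` is constrained for the component `𝒞`: it belongs to at least one
member of `𝒞`. -/
def ConstrainedCol {α : Type*} [DecidableEq α] (𝓡 : Finset (Finset α))
    (𝒞 : (overlapGraph 𝓡).ConnectedComponent) (x : α) : Prop :=
  ∃ R, InComponent 𝓡 𝒞 R ∧ x ∈ R.1

/-!
Let `x`, `z` lie in the constrained Venn class of `a` and `y` between them. A member of the
component containing `a` contains `x` and `z`, hence the interval between them and so `y`.
A member `R` containing `y` but not `a` misses `x` and `z`, so as an interval it lies strictly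
between them. This property spreads along overlaps inside the component: if `A` lies strictly
between `x` and `z` and `B` overlaps `A` without doing so, the interval `B` reaches `x` or `z`,
hence contains `a`, hence both `x` and `z`, hence all of `A`. So every member of the component
lies strictly between `x` and `z`, including one that contains `a` and therefore `x`.
-/

theorem SimpleGraph.Reachable.imp_of_adj {V : Type*} {G : SimpleGraph V} {P : V → Prop}
    (hP : ∀ ⦃A B⦄, G.Adj A B → P A → P B) {u v : V} (huv : G.Reachable u v) (hu : P u) :
    P v := by
  rw [reachable_iff_reflTransGen] at huv
  induction huv with
  | refl => exact hu
  | tail _ hAB ih => exact hP hAB ih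

section Interval

variable {α : Type*} {U : Finset α} {σ : α → ℕ}

def LiesStrictlyBetween (σ : α → ℕ) (x z : α) (S : Finset α) : Prop :=
  ∀ u ∈ S, σ x < σ u ∧ σ u < σ z

theorem ConvexIn.liesStrictlyBetween {R : Finset α} (hR : ConvexIn U σ R) (hRU : R ⊆ U)
    {x y z : α} (hx : x ∈ U) (hy : y ∈ U) (hz : z ∈ U) (hxy : σ x ≤ σ y) (hyz : σ y ≤ σ z)
    (hyR : y ∈ R) (hxR : x ∉ R) (hzR : z ∉ R) : LiesStrictlyBetween σ x z R := by
  intro u hu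
  constructor
  · by_contra! hux
    exact hxR (hR u (hRU hu) x hx y hy hux hxy hu hyR)
  · by_contra! hzu
    exact hzR (hR y hy z hz u (hRU hu) hyz hzu hyR hu)

theorem ConvexIn.mem_or_mem_of_not_liesStrictlyBetween {B : Finset α} (hB : ConvexIn U σ B)
    (hBU : B ⊆ U) {x s z : α} (hx : x ∈ U) (hz : z ∈ U) (hs : s ∈ B) (hxs : σ x < σ s)
    (hsz : σ s < σ z) (hBxz : ¬ LiesStrictlyBetween σ x z B) : x ∈ B ∨ z ∈ B := by
  obtain ⟨t, htB, ht⟩ : ∃ t ∈ B, ¬ (σ x < σ t ∧ σ t < σ z) := by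
    simpa [LiesStrictlyBetween] using hBxz
  rcases not_and_or.mp ht with htx | hzt
  · exact .inl (hB t (hBU htB) x hx s (hBU hs) (not_lt.mp htx) hxs.le htB hs)
  · exact .inr (hB s (hBU hs) z hz t (hBU htB) hsz.le (not_lt.mp hzt) hs htB)

variable [DecidableEq α]

theorem Overlaps.liesStrictlyBetween {A B : Finset α} (hAB : Overlaps A B)
    (hB : ConvexIn U σ B) (hAU : A ⊆ U) (hBU : B ⊆ U) {x z : α} (hx : x ∈ U) (hz : z ∈ U)
    (hxzB : x ∈ B ↔ z ∈ B) (hA : LiesStrictlyBetween σ x z A) :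
    LiesStrictlyBetween σ x z B := by
  obtain ⟨⟨s, hs⟩, hAsubB, -⟩ := hAB
  rw [Finset.mem_inter] at hs
  by_contra hBxz
  have hxB : x ∈ B := by
    obtain ⟨hxs, hsz⟩ := hA s hs.1
    rcases hB.mem_or_mem_of_not_liesStrictlyBetween hBU hx hz hs.2 hxs hsz hBxz with hxB | hzB
    exacts [hxB, hxzB.mpr hzB]
  refine hAsubB fun u hu => ?_
  exact hB x hx u (hAU hu) z hz (hA u hu).1.le (hA u hu).2.le hxB (hxzB.mp hxB)

end Interval

section Component

variable {α : Type*} [DecidableEq α] {U : Finset α} {𝓡 : Finset (Finset α)} {σ : α → ℕ}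
  {𝒞 : (overlapGraph 𝓡).ConnectedComponent}

theorem not_liesStrictlyBetween_of_inComponent (hsub : ∀ R ∈ 𝓡, R ⊆ U)
    (hconv : ∀ R ∈ 𝓡, ConvexIn U σ R) {a x z : α} (hcon : ConstrainedCol 𝓡 𝒞 a)
    (hx : x ∈ U) (hz : z ∈ U) (hax : SameVennClass 𝓡 𝒞 a x) (haz : SameVennClass 𝓡 𝒞 a z)
    {R : {R // R ∈ 𝓡}} (hR : InComponent 𝓡 𝒞 R) : ¬ LiesStrictlyBetween σ x z R.1 := by
  intro hRxz
  obtain ⟨R₀, hR₀, haR₀⟩ := hcon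
  have hspread : ∀ ⦃A B⦄, (overlapGraph 𝓡).Adj A B →
      InComponent 𝓡 𝒞 A ∧ LiesStrictlyBetween σ x z A.1 →
      InComponent 𝓡 𝒞 B ∧ LiesStrictlyBetween σ x z B.1 := by
    rintro A B hAB ⟨hA, hAxz⟩
    have hB : InComponent 𝓡 𝒞 B :=
      (SimpleGraph.ConnectedComponent.connectedComponentMk_eq_of_adj hAB).symm.trans hA
    exact ⟨hB, Overlaps.liesStrictlyBetween hAB (hconv B.1 B.2) (hsub A.1 A.2) (hsub B.1 B.2)
      hx hz ((hax B hB).symm.trans (haz B hB)) hAxz⟩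
  have hreach : (overlapGraph 𝓡).Reachable R R₀ :=
    SimpleGraph.ConnectedComponent.exact (hR.trans hR₀.symm)
  have hR₀xz := (hreach.imp_of_adj hspread ⟨hR, hRxz⟩).2
  exact lt_irrefl _ (hR₀xz x ((hax R₀ hR₀).mp haR₀)).1

end Component

theorem constrained_vennClass_consecutive_general {α : Type*} [DecidableEq α]
    (U : Finset α) (𝓡 : Finset (Finset α)) (hsub : ∀ R ∈ 𝓡, R ⊆ U)
    (σ : α → ℕ) (hσ : IsC1POrdering U 𝓡 σ)
    (𝒞 : (overlapGraph 𝓡).ConnectedComponent)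
    (a : α) (hcon : ConstrainedCol 𝓡 𝒞 a) :
    ConvexIn U σ {y : α | y ∈ U ∧ SameVennClass 𝓡 𝒞 a y} := by
  have hconv := hσ.2
  rintro x hx y hy z hz hxy hyz ⟨-, hax⟩ ⟨-, haz⟩
  refine ⟨hy, fun R hR => ⟨fun haR => ?_, fun hyR => ?_⟩⟩
  · exact hconv R.1 R.2 x hx y hy z hz hxy hyz ((hax R hR).mp haR) ((haz R hR).mp haR)
  · by_contra haR
    refine not_liesStrictlyBetween_of_inComponent hsub hconv hcon hx hz hax haz hR ?_
    exact (hconv R.1 R.2).liesStrictlyBetween (hsub R.1 R.2) hx hy hz hxy hyz hyR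
      (mt (hax R hR).mpr haR) (mt (haz R hR).mpr haR)

/-- If `𝓡` has the consecutive-ones property, `σ` is any
consecutive-ones ordering for it, and `𝒞` is a connected component of the overlap
graph of `𝓡`, then every constrained Venn class of `𝒞` occupies consecutive
positions under `σ`. -/
theorem constrained_vennClass_consecutive {α : Type*} [DecidableEq α]
    (U : Finset α) (𝓡 : Finset (Finset α)) (hsub : ∀ R ∈ 𝓡, R ⊆ U)
    (σ : α → ℕ) (hσ : IsC1POrdering U 𝓡 σ)
    (𝒞 : (overlapGraph 𝓡).ConnectedComponent)
    (a : α) (ha : a ∈ U) (hcon : ConstrainedCol 𝓡 𝒞 a) :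
    ConvexIn U σ {y : α | y ∈ U ∧ SameVennClass 𝓡 𝒞 a y} :=
  constrained_vennClass_consecutive_general U 𝓡 hsub σ hσ 𝒞 a hcon
end

section
/- Let ℛ' be a finite family of subsets of a finite column set U that has the consecutive-ones property, let 𝒞 be a connected component of the overlap graph of ℛ' with Q the union of the members of 𝒞, and let Z ⊆ U with Z not a subset of Q. Suppose there exist a consecutive-ones ordering σ of ℛ' and columns a, b, c lying in three pairwise distinct constrained Venn classes of 𝒞 such that σ(a) < σ(b) < σ(c), a ∉ Z, b ∈ Z, and c ∉ Z (a 0-1-0 configuration for Z). Then ℛ' ∪ {Z} does not have the consecutive-ones property. -/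
section Orderings

variable {α : Type*} {U : Finset α} {π τ τ' : α → ℕ}

def Between (π : α → ℕ) (x y z : α) : Prop :=
  π x < π y ∧ π y < π z ∨ π z < π y ∧ π y < π x

def Agree (τ τ' : α → ℕ) (x y : α) : Prop :=
  τ x < τ y ↔ τ' x < τ' y

theorem Agree.symm {x y : α} (h : Agree τ τ' x y) (hτ : Set.InjOn τ U) (hτ' : Set.InjOn τ' U)
    (hx : x ∈ U) (hy : y ∈ U) (hxy : x ≠ y) : Agree τ τ' y x := by
  have := mt (hτ hx hy) hxy
  have := mt (hτ' hx hy) hxy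
  unfold Agree at *
  omega

theorem ConvexIn.lt_or_gt_of_notMem {S : Set α} (hS : ConvexIn U π S) {x y z : α}
    (hx : x ∈ U) (hy : y ∈ U) (hz : z ∈ U) (hxS : x ∈ S) (hzS : z ∈ S) (hyS : y ∉ S) :
    π y < π x ∧ π y < π z ∨ π x < π y ∧ π z < π y := by
  have h₁ : ¬ (π x ≤ π y ∧ π y ≤ π z) := fun h => hyS (hS x hx y hy z hz h.1 h.2 hxS hzS)
  have h₂ : ¬ (π z ≤ π y ∧ π y ≤ π x) := fun h => hyS (hS z hz y hy x hx h.1 h.2 hzS hxS)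
  omega

theorem ConvexIn.between {A B : Set α} (hA : ConvexIn U π A) (hB : ConvexIn U π B)
    {x y t : α} (hx : x ∈ U) (hy : y ∈ U) (ht : t ∈ U)
    (hxA : x ∈ A) (htA : t ∈ A) (hyA : y ∉ A) (hxB : x ∈ B) (hyB : y ∈ B) (htB : t ∉ B) :
    Between π y x t := by
  have := hA.lt_or_gt_of_notMem hx hy ht hxA htA hyA
  have := hB.lt_or_gt_of_notMem hx ht hy hxB hyB htB
  unfold Between
  omega

theorem ConvexIn.union {A B : Set α} (hA : ConvexIn U π A) (hB : ConvexIn U π B)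
    {s : α} (hs : s ∈ U) (hsA : s ∈ A) (hsB : s ∈ B) : ConvexIn U π (A ∪ B) := by
  intro x hx y hy z hz hxy hyz hxAB hzAB
  rcases le_total (π y) (π s) with hys | hsy
  · rcases hxAB with hxA | hxB
    · exact Or.inl (hA x hx y hy s hs hxy hys hxA hsA)
    · exact Or.inr (hB x hx y hy s hs hxy hys hxB hsB)
  · rcases hzAB with hzA | hzB
    · exact Or.inl (hA s hs y hy z hz hsy hyz hsA hzA)
    · exact Or.inr (hB s hs y hy z hz hsy hyz hsB hzB)

/-- `X` cannot reach past `p` or `q`, so it lies between them. -/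
theorem ConvexIn.mem_of_mem_of_between {X Y : Set α} (hX : ConvexIn U π X)
    (hY : ConvexIn U π Y) {p q t : α} (hp : p ∈ U) (hq : q ∈ U) (ht : t ∈ U)
    (hpY : p ∈ Y) (hqY : q ∈ Y) (hpX : p ∉ X) (hqX : q ∉ X) (htX : t ∈ X)
    (hpt : π p ≤ π t) (htq : π t ≤ π q) : ∀ w ∈ U, w ∈ X → w ∈ Y := by
  intro w hw hwX
  have := hX.lt_or_gt_of_notMem ht hp hw htX hwX hpX
  have := hX.lt_or_gt_of_notMem ht hq hw htX hwX hqX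
  exact hY p hp w hw q hq (by omega) (by omega) hpY hqY

theorem not_between_of_convexIn {W Z : Set α} (hW : ConvexIn U π W) (hZ : ConvexIn U π Z)
    {a b c z : α} (ha : a ∈ U) (hb : b ∈ U) (hc : c ∈ U) (hz : z ∈ U)
    (haW : a ∈ W) (hcW : c ∈ W) (hzW : z ∉ W)
    (haZ : a ∉ Z) (hbZ : b ∈ Z) (hcZ : c ∉ Z) (hzZ : z ∈ Z) : ¬ Between π a b c := by
  have := hW.lt_or_gt_of_notMem ha hz hc haW hcW hzW
  have := hZ.lt_or_gt_of_notMem hb ha hz hbZ hzZ haZ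
  have := hZ.lt_or_gt_of_notMem hb hc hz hbZ hzZ hcZ
  unfold Between
  omega

theorem IsC1POrdering.mono {𝓡 𝓡' : Finset (Finset α)} (h : IsC1POrdering U 𝓡 π)
    (h𝓡 : 𝓡' ⊆ 𝓡) : IsC1POrdering U 𝓡' π :=
  ⟨h.1, fun R hR => h.2 R (h𝓡 hR)⟩

def rev (U : Finset α) (π : α → ℕ) : α → ℕ := fun x => U.sup π - π x

theorem rev_lt_rev_iff {x y : α} (hx : x ∈ U) (hy : y ∈ U) :
    rev U π x < rev U π y ↔ π y < π x := by
  have := Finset.le_sup (f := π) hx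
  have := Finset.le_sup (f := π) hy
  unfold rev
  omega

theorem IsC1POrdering.rev {𝓡 : Finset (Finset α)} (h : IsC1POrdering U 𝓡 π) :
    IsC1POrdering U 𝓡 (rev U π) := by
  refine ⟨fun x hx y hy hxy => h.1 hx hy ?_, fun R hR x hx y hy z hz hxy hyz hxR hzR => ?_⟩
  · have := Finset.le_sup (f := π) hx
    have := Finset.le_sup (f := π) hy
    unfold _root_.rev at hxy
    omega
  · have := Finset.le_sup (f := π) hx
    have := Finset.le_sup (f := π) hy
    have := Finset.le_sup (f := π) hz
    unfold _root_.rev at hxy hyz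
    exact h.2 R hR z hz y hy x hx (by omega) (by omega) hzR hxR

end Orderings

section Families

variable {α : Type*} {U : Finset α} {π : α → ℕ}

def VennEquiv (𝓕 : Finset (Finset α)) (x y : α) : Prop :=
  ∀ T ∈ 𝓕, x ∈ T ↔ y ∈ T

theorem VennEquiv.refl (𝓕 : Finset (Finset α)) (x : α) : VennEquiv 𝓕 x x :=
  fun _ _ => Iff.rfl

theorem VennEquiv.symm {𝓕 : Finset (Finset α)} {x y : α} (h : VennEquiv 𝓕 x y) :
    VennEquiv 𝓕 y x :=
  fun T hT => (h T hT).symm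

theorem VennEquiv.trans {𝓕 : Finset (Finset α)} {x y z : α} (h : VennEquiv 𝓕 x y)
    (h' : VennEquiv 𝓕 y z) : VennEquiv 𝓕 x z :=
  fun T hT => (h T hT).trans (h' T hT)

variable [DecidableEq α]

/-- An inductive form of connectedness of the overlap graph. -/
inductive OverlapConnected : Finset (Finset α) → Prop
  | singleton (R : Finset α) : OverlapConnected {R}
  | insert {R S : Finset α} {𝓕 : Finset (Finset α)} :
      OverlapConnected 𝓕 → S ∈ 𝓕 → Overlaps R S → OverlapConnected (insert R 𝓕)

theorem OverlapConnected.convexIn_sup {𝓕 : Finset (Finset α)} (h𝓕 : OverlapConnected 𝓕)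
    (h𝓕U : ∀ T ∈ 𝓕, T ⊆ U) (hπ : ∀ T ∈ 𝓕, ConvexIn U π (T : Set α)) :
    ConvexIn U π ((𝓕.sup id : Finset α) : Set α) := by
  induction h𝓕 with
  | singleton R => simpa using hπ R (Finset.mem_singleton_self R)
  | @insert R S 𝓕 _ hS hRS ih =>
    obtain ⟨s, hs⟩ := hRS.1
    rw [Finset.mem_inter] at hs
    rw [Finset.sup_insert, id, Finset.sup_eq_union, Finset.coe_union]
    refine (hπ R (Finset.mem_insert_self R 𝓕)).union
      (ih (fun T hT => h𝓕U T (Finset.mem_insert_of_mem hT))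
        (fun T hT => hπ T (Finset.mem_insert_of_mem hT)))
      (h𝓕U R (Finset.mem_insert_self R 𝓕) hs.1) hs.1 ?_
    exact Finset.mem_sup.2 ⟨S, hS, hs.2⟩

theorem vennEquiv_insert_iff {R : Finset α} {𝓕 : Finset (Finset α)} {x y : α} :
    VennEquiv (insert R 𝓕) x y ↔ (x ∈ R ↔ y ∈ R) ∧ VennEquiv 𝓕 x y :=
  Finset.forall_mem_insert _ _ _

theorem vennEquiv_of_notMem_sup {𝓕 : Finset (Finset α)} {x y : α} (hx : x ∉ 𝓕.sup id)
    (hy : y ∉ 𝓕.sup id) : VennEquiv 𝓕 x y := fun T hT =>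
  ⟨fun hxT => absurd (Finset.mem_sup.2 ⟨T, hT, hxT⟩) hx,
    fun hyT => absurd (Finset.mem_sup.2 ⟨T, hT, hyT⟩) hy⟩

theorem VennEquiv.mem_sup {𝓕 : Finset (Finset α)} {x y : α} (h : VennEquiv 𝓕 x y)
    (hx : x ∈ 𝓕.sup id) : y ∈ 𝓕.sup id := by
  obtain ⟨T, hT, hxT⟩ := Finset.mem_sup.1 hx
  exact Finset.mem_sup.2 ⟨T, hT, (h T hT).1 hxT⟩

theorem OverlapConnected.convexIn_vennClass {𝓕 : Finset (Finset α)}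
    (h𝓕 : OverlapConnected 𝓕) (h𝓕U : ∀ T ∈ 𝓕, T ⊆ U)
    (hπ : ∀ T ∈ 𝓕, ConvexIn U π (T : Set α)) {x : α} (hx : x ∈ 𝓕.sup id) :
    ConvexIn U π {y | VennEquiv 𝓕 x y} := by
  induction h𝓕 generalizing x with
  | singleton R =>
    intro p hp t ht q hq hpt htq hxp hxq
    simp only [Finset.sup_singleton, id] at hx
    have hR := hπ R (Finset.mem_singleton_self R)
    have htR := hR p hp t ht q hq hpt htq ((hxp R (by simp)).1 hx) ((hxq R (by simp)).1 hx)
    exact fun T hT => by rw [Finset.mem_singleton.1 hT]; exact iff_of_true hx htR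
  | @insert R S 𝓕 h𝓕 hS hRS ih =>
    intro p hp t ht q hq hpt htq hxp hxq
    simp only [Set.mem_ofPred_eq, vennEquiv_insert_iff] at hxp hxq ⊢
    have hR : ConvexIn U π (R : Set α) := hπ R (Finset.mem_insert_self R 𝓕)
    have hRU : R ⊆ U := h𝓕U R (Finset.mem_insert_self R 𝓕)
    have h𝓕U' : ∀ T ∈ 𝓕, T ⊆ U := fun T hT => h𝓕U T (Finset.mem_insert_of_mem hT)
    have hπ' : ∀ T ∈ 𝓕, ConvexIn U π (T : Set α) :=
      fun T hT => hπ T (Finset.mem_insert_of_mem hT)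
    obtain ⟨s, hs⟩ := hRS.1
    rw [Finset.mem_inter] at hs
    by_cases hxW : x ∈ 𝓕.sup id
    · have hK := ih h𝓕U' hπ' hxW
      refine ⟨⟨fun hxR => hR p hp t ht q hq hpt htq (hxp.1.1 hxR) (hxq.1.1 hxR), fun htR => ?_⟩,
        hK p hp t ht q hq hpt htq hxp.2 hxq.2⟩
      by_contra hxR
      -- otherwise `R` lies inside the class of `x`, which meets `S`, so `R ⊆ S`
      have hRK : ∀ r ∈ R, VennEquiv 𝓕 x r := fun r hr =>
        hR.mem_of_mem_of_between hK hp hq ht hxp.2 hxq.2 (mt hxp.1.2 hxR) (mt hxq.1.2 hxR)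
          htR hpt htq r (hRU hr) hr
      exact hRS.2.1 fun r hr => ((hRK s hs.1).symm.trans (hRK r hr) S hS).1 hs.2
    · have hxR : x ∈ R := by
        simpa [Finset.sup_insert, hxW] using hx
      have hpW : p ∉ 𝓕.sup id := fun h => hxW (hxp.2.symm.mem_sup h)
      have hqW : q ∉ 𝓕.sup id := fun h => hxW (hxq.2.symm.mem_sup h)
      have htR := hR p hp t ht q hq hpt htq (hxp.1.1 hxR) (hxq.1.1 hxR)
      refine ⟨iff_of_true hxR htR, vennEquiv_of_notMem_sup hxW fun htW => ?_⟩
      -- otherwise the union of `𝓕` lies inside `R`, so `S ⊆ R`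
      have hWR := (h𝓕.convexIn_sup h𝓕U' hπ').mem_of_mem_of_between hR hp hq ht
        (hxp.1.1 hxR) (hxq.1.1 hxR) hpW hqW htW hpt htq
      exact hRS.2.2 fun w hw =>
        hWR w (h𝓕U' S hS hw) (Finset.mem_coe.2 (Finset.mem_sup.2 ⟨S, hS, hw⟩))

end Families

section Orientation

variable {α : Type*} [DecidableEq α] {U : Finset α} {π : α → ℕ}

theorem Overlaps.lt_of_lt {R S : Finset α} (hRS : Overlaps R S) (hR : ConvexIn U π (R : Set α))
    (hS : ConvexIn U π (S : Set α)) (hRU : R ⊆ U) (hSU : S ⊆ U) {u u' v v' : α}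
    (hu : u ∈ R) (hu' : u' ∈ R) (hv : v ∈ S) (hvR : v ∉ R) (hv' : v' ∈ S) (hv'R : v' ∉ R)
    (h : π u < π v) : π u' < π v' := by
  by_contra! h'
  have := hR.lt_or_gt_of_notMem (hRU hu) (hSU hv) (hRU hu') hu hu' hvR
  have := hR.lt_or_gt_of_notMem (hRU hu) (hSU hv') (hRU hu') hu hu' hv'R
  -- `R` would sit strictly between `v'` and `v`, hence inside `S`
  exact hRS.2.1 fun r hr => hR.mem_of_mem_of_between hS (hSU hv') (hSU hv) (hRU hu') hv' hv
    hv'R hvR hu' (by omega) (by omega) r (hRU hr) hr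

theorem Overlaps.lt_iff_lt {R S : Finset α} (hRS : Overlaps R S)
    (hR : ConvexIn U π (R : Set α)) (hS : ConvexIn U π (S : Set α)) (hRU : R ⊆ U) (hSU : S ⊆ U)
    {u u' v v' : α} (hu : u ∈ R) (hu' : u' ∈ R) (hv : v ∈ S) (hvR : v ∉ R) (hv' : v' ∈ S)
    (hv'R : v' ∉ R) : π u < π v ↔ π u' < π v' :=
  ⟨hRS.lt_of_lt hR hS hRU hSU hu hu' hv hvR hv' hv'R,
    hRS.lt_of_lt hR hS hRU hSU hu' hu hv' hv'R hv hvR⟩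

end Orientation

section Agreement

variable {α : Type*} [DecidableEq α] {U : Finset α} {τ τ' : α → ℕ}

def AgreeOn (𝓕 : Finset (Finset α)) (τ τ' : α → ℕ) : Prop :=
  ∀ x ∈ 𝓕.sup id, ∀ y ∈ 𝓕.sup id, ¬ VennEquiv 𝓕 x y → Agree τ τ' x y

variable {R S : Finset α} {𝓕 : Finset (Finset α)}

theorem AgreeOn.agree_of_separated (h𝓕 : OverlapConnected 𝓕) (hS : S ∈ 𝓕)
    (hRS : Overlaps R S) (hU : ∀ T ∈ insert R 𝓕, T ⊆ U) (hτ : IsC1POrdering U (insert R 𝓕) τ)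
    (hτ' : IsC1POrdering U (insert R 𝓕) τ') (hagree : AgreeOn 𝓕 τ τ') {x y : α}
    (hx : x ∈ 𝓕.sup id) (hxy : VennEquiv 𝓕 x y) (hxR : x ∈ R) (hyR : y ∉ R)
    (hsplit : ∃ t ∈ 𝓕.sup id, ¬ VennEquiv 𝓕 x t) : Agree τ τ' x y := by
  have h𝓕U : ∀ T ∈ 𝓕, T ⊆ U := fun T hT => hU T (Finset.mem_insert_of_mem hT)
  have hWU : 𝓕.sup id ⊆ U := Finset.sup_le h𝓕U
  have hy := hxy.mem_sup hx
  have hR : ∀ {π}, IsC1POrdering U (insert R 𝓕) π → ConvexIn U π (R : Set α) :=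
    fun hπ => hπ.2 R (Finset.mem_insert_self R 𝓕)
  have hW : ∀ {π}, IsC1POrdering U (insert R 𝓕) π → ConvexIn U π ((𝓕.sup id : Finset α) : Set α) :=
    fun hπ => h𝓕.convexIn_sup h𝓕U (hπ.mono (Finset.subset_insert R 𝓕)).2
  by_cases hRsplit : ∃ t ∈ 𝓕.sup id, t ∈ R ∧ ¬ VennEquiv 𝓕 x t
  · obtain ⟨t, htW, htR, hxt⟩ := hRsplit
    have hbtw : ∀ {π}, IsC1POrdering U (insert R 𝓕) π → Between π y x t := fun hπ =>
      (hR hπ).between (h𝓕.convexIn_vennClass h𝓕U (hπ.mono (Finset.subset_insert R 𝓕)).2 hx)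
        (hWU hx) (hWU hy) (hWU htW) hxR htR hyR (VennEquiv.refl 𝓕 x) hxy hxt
    have := hagree y hy t htW fun hyt => hxt (hxy.trans hyt)
    have := hbtw hτ
    have := hbtw hτ'
    unfold Agree Between at *
    omega
  · push Not at hRsplit
    obtain ⟨t, htW, hxt⟩ := hsplit
    have htR : t ∉ R := fun htR => hxt (hRsplit t htW htR)
    -- `R` is not inside the union, else it would lie in the class of `x ∈ S`, inside `S`
    obtain ⟨r, hrR, hrW⟩ : ∃ r ∈ R, r ∉ 𝓕.sup id := by
      by_contra! hRW
      obtain ⟨s, hs⟩ := hRS.1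
      rw [Finset.mem_inter] at hs
      have hxS := (hRsplit s (hRW s hs.1) hs.1 S hS).2 hs.2
      exact hRS.2.1 fun w hw => (hRsplit w (hRW w hw) hw S hS).1 hxS
    have hrU := hU R (Finset.mem_insert_self R 𝓕) hrR
    have hbtw : ∀ {π}, IsC1POrdering U (insert R 𝓕) π → Between π y x r ∧ Between π t x r :=
      fun hπ => ⟨(hR hπ).between (hW hπ) (hWU hx) (hWU hy) hrU hxR hrR hyR hx hy hrW,
        (hR hπ).between (hW hπ) (hWU hx) (hWU htW) hrU hxR hrR htR hx htW hrW⟩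
    have := hagree x hx t htW hxt
    have := hbtw hτ
    have := hbtw hτ'
    unfold Agree Between at *
    omega

theorem agree_of_mem_notMem_sup (h𝓕 : OverlapConnected 𝓕) (hS : S ∈ 𝓕)
    (hRS : Overlaps R S) (hU : ∀ T ∈ insert R 𝓕, T ⊆ U) (hτ : IsC1POrdering U (insert R 𝓕) τ)
    (hτ' : IsC1POrdering U (insert R 𝓕) τ')
    (hW : ∀ x ∈ 𝓕.sup id, ∀ w ∈ 𝓕.sup id, x ∈ R → w ∉ R → Agree τ τ' x w)
    {x y : α} (hx : x ∈ 𝓕.sup id) (hyR : y ∈ R) (hyW : y ∉ 𝓕.sup id) : Agree τ τ' x y := by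
  have h𝓕U : ∀ T ∈ 𝓕, T ⊆ U := fun T hT => hU T (Finset.mem_insert_of_mem hT)
  have hWU : 𝓕.sup id ⊆ U := Finset.sup_le h𝓕U
  have hRU : R ⊆ U := hU R (Finset.mem_insert_self R 𝓕)
  have hconv : ∀ {π}, IsC1POrdering U (insert R 𝓕) π →
      ConvexIn U π (R : Set α) ∧ ConvexIn U π ((𝓕.sup id : Finset α) : Set α) := fun hπ =>
    ⟨hπ.2 R (Finset.mem_insert_self R 𝓕),
      h𝓕.convexIn_sup h𝓕U (hπ.mono (Finset.subset_insert R 𝓕)).2⟩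
  have hmem : ∀ {w}, w ∈ S → w ∈ 𝓕.sup id := fun hw => Finset.mem_sup.2 ⟨S, hS, hw⟩
  by_cases hxR : x ∈ R
  · obtain ⟨w, hwS, hwR⟩ := Finset.not_subset.1 hRS.2.2
    have hbtw : ∀ {π}, IsC1POrdering U (insert R 𝓕) π → Between π y x w := fun hπ =>
      (hconv hπ).2.between (hconv hπ).1 (hWU hx) (hRU hyR) (hWU (hmem hwS)) hx (hmem hwS) hyW
        hxR hyR hwR
    have := hW x hx w (hmem hwS) hxR hwR
    have := hbtw hτ
    have := hbtw hτ'
    unfold Agree Between at *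
    omega
  · obtain ⟨t, ht⟩ := hRS.1
    rw [Finset.mem_inter] at ht
    have hbtw : ∀ {π}, IsC1POrdering U (insert R 𝓕) π → Between π x t y := fun hπ =>
      (hconv hπ).1.between (hconv hπ).2 (hRU ht.1) (hWU hx) (hRU hyR) ht.1 hyR hxR (hmem ht.2)
        hx hyW
    have := hW t (hmem ht.2) x hx ht.1 hxR
    have := hbtw hτ
    have := hbtw hτ'
    unfold Agree Between at *
    omega

theorem AgreeOn.insert (h𝓕 : OverlapConnected 𝓕) (hS : S ∈ 𝓕)
    (hRS : Overlaps R S) (hU : ∀ T ∈ insert R 𝓕, T ⊆ U) (hτ : IsC1POrdering U (insert R 𝓕) τ)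
    (hτ' : IsC1POrdering U (insert R 𝓕) τ') (hagree : AgreeOn 𝓕 τ τ')
    (hsplit : ∀ x ∈ 𝓕.sup id, ∀ y, VennEquiv 𝓕 x y → x ∈ R → y ∉ R → Agree τ τ' x y) :
    AgreeOn (insert R 𝓕) τ τ' := by
  have hWU : 𝓕.sup id ⊆ U := Finset.sup_le fun T hT => hU T (Finset.mem_insert_of_mem hT)
  have hRU : R ⊆ U := hU R (Finset.mem_insert_self R 𝓕)
  have hsymm : ∀ {x y}, x ∈ U → y ∈ U → x ≠ y → Agree τ τ' y x → Agree τ τ' x y :=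
    fun hx hy hxy h => h.symm hτ.1 hτ'.1 hy hx (Ne.symm hxy)
  have hW : ∀ x ∈ 𝓕.sup id, ∀ w ∈ 𝓕.sup id, x ∈ R → w ∉ R → Agree τ τ' x w :=
    fun x hx w hw hxR hwR => by
      by_cases hxw : VennEquiv 𝓕 x w
      · exact hsplit x hx w hxw hxR hwR
      · exact hagree x hx w hw hxw
  intro x hx y hy hxy
  rw [Finset.sup_insert, id, Finset.sup_eq_union, Finset.mem_union] at hx hy
  rw [vennEquiv_insert_iff] at hxy
  by_cases hxW : x ∈ 𝓕.sup id <;> by_cases hyW : y ∈ 𝓕.sup id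
  · by_cases hxy' : VennEquiv 𝓕 x y
    · by_cases hxR : x ∈ R
      · exact hW x hxW y hyW hxR fun hyR => hxy ⟨iff_of_true hxR hyR, hxy'⟩
      · have hyR : y ∈ R := by_contra fun hyR => hxy ⟨iff_of_false hxR hyR, hxy'⟩
        exact hsymm (hWU hxW) (hWU hyW) (fun h => hxR (h ▸ hyR)) (hW y hyW x hxW hyR hxR)
    · exact hagree x hxW y hyW hxy'
  · exact agree_of_mem_notMem_sup h𝓕 hS hRS hU hτ hτ' hW hxW (hy.resolve_right hyW) hyW
  · exact hsymm (hRU (hx.resolve_right hxW)) (hWU hyW) (fun h => hxW (h ▸ hyW))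
      (agree_of_mem_notMem_sup h𝓕 hS hRS hU hτ hτ' hW hyW (hx.resolve_right hxW) hxW)
  · exact absurd ⟨iff_of_true (hx.resolve_right hxW) (hy.resolve_right hyW),
      vennEquiv_of_notMem_sup hxW hyW⟩ hxy

/-- The single Venn class of `𝓕` lies in `S`, so `Overlaps.lt_iff_lt` applies. -/
theorem agree_of_forall_vennEquiv (hS : S ∈ 𝓕) (hRS : Overlaps R S)
    (hU : ∀ T ∈ insert R 𝓕, T ⊆ U) (hτ : IsC1POrdering U (insert R 𝓕) τ)
    (hτ' : IsC1POrdering U (insert R 𝓕) τ')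
    (hone : ∀ x ∈ 𝓕.sup id, ∀ y ∈ 𝓕.sup id, VennEquiv 𝓕 x y) {s w : α} (hsR : s ∈ R)
    (hsS : s ∈ S) (hwS : w ∈ S) (hwR : w ∉ R) (hsw : Agree τ τ' s w) {x y : α}
    (hx : x ∈ 𝓕.sup id) (hxy : VennEquiv 𝓕 x y) (hxR : x ∈ R) (hyR : y ∉ R) :
    Agree τ τ' x y := by
  have hRU : R ⊆ U := hU R (Finset.mem_insert_self R 𝓕)
  have hSU : S ⊆ U := hU S (Finset.mem_insert_of_mem hS)
  have hxS : x ∈ S := (hone _ (Finset.mem_sup.2 ⟨S, hS, hsS⟩) x hx S hS).1 hsS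
  have hyS : y ∈ S := (hxy S hS).1 hxS
  have horient : ∀ {π}, IsC1POrdering U (insert R 𝓕) π → (π x < π y ↔ π s < π w) :=
    fun hπ => hRS.lt_iff_lt (hπ.2 R (Finset.mem_insert_self R 𝓕))
      (hπ.2 S (Finset.mem_insert_of_mem hS)) hRU hSU hxR hsR hyS hyR hwS hwR
  unfold Agree
  rw [horient hτ, horient hτ']
  exact hsw

theorem OverlapConnected.agreeOn_or_agreeOn_rev (h𝓕 : OverlapConnected 𝓕)
    (hU : ∀ T ∈ 𝓕, T ⊆ U) (hτ : IsC1POrdering U 𝓕 τ) (hτ' : IsC1POrdering U 𝓕 τ') :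
    AgreeOn 𝓕 τ τ' ∨ AgreeOn 𝓕 τ (rev U τ') := by
  induction h𝓕 generalizing τ τ' with
  | singleton R =>
    refine Or.inl fun x hx y hy hxy => absurd (fun T hT => ?_) hxy
    simp only [Finset.sup_singleton, id, Finset.mem_singleton] at hx hy hT
    exact hT ▸ iff_of_true hx hy
  | @insert R S 𝓕 h𝓕 hS hRS ih =>
    have h𝓕U : ∀ T ∈ 𝓕, T ⊆ U := fun T hT => hU T (Finset.mem_insert_of_mem hT)
    have hsub := Finset.subset_insert R 𝓕
    by_cases hone : ∀ x ∈ 𝓕.sup id, ∀ y ∈ 𝓕.sup id, VennEquiv 𝓕 x y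
    · have hagree : ∀ π, AgreeOn 𝓕 τ π := fun π x hx y hy hxy => absurd (hone x hx y hy) hxy
      obtain ⟨s, hs⟩ := hRS.1
      rw [Finset.mem_inter] at hs
      obtain ⟨w, hwS, hwR⟩ := Finset.not_subset.1 hRS.2.2
      have hsU : s ∈ U := hU R (Finset.mem_insert_self R 𝓕) hs.1
      have hwU : w ∈ U := h𝓕U S hS hwS
      by_cases hsw : Agree τ τ' s w
      · exact Or.inl <| (hagree τ').insert h𝓕 hS hRS hU hτ hτ' fun x hx _ hxy hxR hyR =>
          agree_of_forall_vennEquiv hS hRS hU hτ hτ' hone hs.1 hs.2 hwS hwR hsw hx hxy hxR hyR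
      · have hsw' : Agree τ (rev U τ') s w := by
          have := mt (hτ'.1 hsU hwU) fun h => hwR (h ▸ hs.1)
          unfold Agree at *
          rw [rev_lt_rev_iff hsU hwU]
          omega
        exact Or.inr <| (hagree _).insert h𝓕 hS hRS hU hτ hτ'.rev fun x hx _ hxy hxR hyR =>
          agree_of_forall_vennEquiv hS hRS hU hτ hτ'.rev hone hs.1 hs.2 hwS hwR hsw' hx hxy hxR
            hyR
    · push Not at hone
      obtain ⟨p, hp, q, hq, hpq⟩ := hone
      have hsplit : ∀ x, ∃ t ∈ 𝓕.sup id, ¬ VennEquiv 𝓕 x t := fun x => by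
        by_cases hxp : VennEquiv 𝓕 x p
        · exact ⟨q, hq, fun hxq => hpq (hxp.symm.trans hxq)⟩
        · exact ⟨p, hp, hxp⟩
      rcases ih h𝓕U (hτ.mono hsub) (hτ'.mono hsub) with h | h
      · exact Or.inl <| h.insert h𝓕 hS hRS hU hτ hτ' fun x hx _ hxy hxR hyR =>
          h.agree_of_separated h𝓕 hS hRS hU hτ hτ' hx hxy hxR hyR (hsplit x)
      · exact Or.inr <| h.insert h𝓕 hS hRS hU hτ hτ'.rev fun x hx _ hxy hxR hyR =>
          h.agree_of_separated h𝓕 hS hRS hU hτ hτ'.rev hx hxy hxR hyR (hsplit x)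

theorem between_of_agreeOn_or_agreeOn_rev {σ : α → ℕ} (h : AgreeOn 𝓕 σ τ ∨ AgreeOn 𝓕 σ (rev U τ)) {a b c : α}
    (ha : a ∈ U) (hb : b ∈ U) (hc : c ∈ U) (haW : a ∈ 𝓕.sup id) (hbW : b ∈ 𝓕.sup id)
    (hcW : c ∈ 𝓕.sup id) (hab : ¬ VennEquiv 𝓕 a b) (hbc : ¬ VennEquiv 𝓕 b c)
    (hσ : σ a < σ b ∧ σ b < σ c) : Between τ a b c := by
  rcases h with h | h
  · have := h a haW b hbW hab
    have := h b hbW c hcW hbc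
    unfold Agree Between at *
    omega
  · have hab' := h a haW b hbW hab
    have hbc' := h b hbW c hcW hbc
    unfold Agree at hab' hbc'
    rw [rev_lt_rev_iff ha hb] at hab'
    rw [rev_lt_rev_iff hb hc] at hbc'
    unfold Between at *
    omega

end Agreement

section Components

variable {α : Type*} [DecidableEq α]

theorem OverlapConnected.nonempty {𝓕 : Finset (Finset α)} (h𝓕 : OverlapConnected 𝓕) :
    𝓕.Nonempty := by
  cases h𝓕 with
  | singleton R => exact Finset.singleton_nonempty R
  | insert => exact Finset.insert_nonempty _ _

/-- A largest overlap-connected subfamily cannot be extended. -/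
theorem overlapConnected_of_exists_overlaps {𝓕 : Finset (Finset α)} (h𝓕 : 𝓕.Nonempty)
    (hcross : ∀ 𝓖 ⊆ 𝓕, 𝓖.Nonempty → 𝓖 ≠ 𝓕 → ∃ T ∈ 𝓕, T ∉ 𝓖 ∧ ∃ S ∈ 𝓖, Overlaps T S) :
    OverlapConnected 𝓕 := by
  classical
  obtain ⟨R, hR⟩ := h𝓕
  obtain ⟨𝓖, h𝓖, hmax⟩ := Finset.exists_max_image (𝓕.powerset.filter OverlapConnected)
    Finset.card ⟨{R}, by simpa [hR] using OverlapConnected.singleton R⟩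
  rw [Finset.mem_filter, Finset.mem_powerset] at h𝓖
  by_contra h𝓕
  obtain ⟨T, hT, hT𝓖, S, hS, hTS⟩ := hcross 𝓖 h𝓖.1 h𝓖.2.nonempty fun h => h𝓕 (h ▸ h𝓖.2)
  have := hmax (insert T 𝓖) (by
    rw [Finset.mem_filter, Finset.mem_powerset]
    exact ⟨Finset.insert_subset hT h𝓖.1, h𝓖.2.insert hS hTS⟩)
  rw [Finset.card_insert_of_notMem hT𝓖] at this
  omega

open Classical in
noncomputable def componentRows (𝓡 : Finset (Finset α))
    (𝒞 : (overlapGraph 𝓡).ConnectedComponent) : Finset (Finset α) :=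
  {T ∈ 𝓡 | ∃ h : T ∈ 𝓡, InComponent 𝓡 𝒞 ⟨T, h⟩}

variable {𝓡 : Finset (Finset α)} {𝒞 : (overlapGraph 𝓡).ConnectedComponent}

theorem mem_componentRows {T : Finset α} :
    T ∈ componentRows 𝓡 𝒞 ↔ ∃ h : T ∈ 𝓡, InComponent 𝓡 𝒞 ⟨T, h⟩ := by
  simp [componentRows]

theorem componentRows_subset : componentRows 𝓡 𝒞 ⊆ 𝓡 :=
  fun _ hT => (mem_componentRows.1 hT).1

theorem vennEquiv_componentRows_iff {x y : α} :
    VennEquiv (componentRows 𝓡 𝒞) x y ↔ SameVennClass 𝓡 𝒞 x y :=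
  ⟨fun h R hR => h R.1 (mem_componentRows.2 ⟨R.2, hR⟩),
    fun h _ hT => h _ (mem_componentRows.1 hT).2⟩

theorem mem_sup_componentRows_iff {x : α} :
    x ∈ (componentRows 𝓡 𝒞).sup id ↔ ConstrainedCol 𝓡 𝒞 x := by
  rw [Finset.mem_sup]
  constructor
  · rintro ⟨T, hT, hxT⟩
    obtain ⟨h, hC⟩ := mem_componentRows.1 hT
    exact ⟨⟨T, h⟩, hC, hxT⟩
  · rintro ⟨R, hR, hxR⟩
    exact ⟨R.1, mem_componentRows.2 ⟨R.2, hR⟩, hxR⟩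

theorem overlapConnected_componentRows {R₀ : {R // R ∈ 𝓡}} (hR₀ : InComponent 𝓡 𝒞 R₀) :
    OverlapConnected (componentRows 𝓡 𝒞) := by
  refine overlapConnected_of_exists_overlaps ⟨R₀.1, mem_componentRows.2 ⟨R₀.2, hR₀⟩⟩ ?_
  intro 𝓖 h𝓖 ⟨S, hS⟩ hne
  obtain ⟨T, hT, hT𝓖⟩ := Finset.exists_of_ssubset (Finset.ssubset_iff_subset_ne.2 ⟨h𝓖, hne⟩)
  obtain ⟨hS𝓡, hSC⟩ := mem_componentRows.1 (h𝓖 hS)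
  obtain ⟨hT𝓡, hTC⟩ := mem_componentRows.1 hT
  obtain ⟨walk⟩ := SimpleGraph.ConnectedComponent.exact (hSC.trans hTC.symm)
  obtain ⟨d, -, hd𝓖, hd𝓖'⟩ := walk.exists_boundary_dart {v | v.1 ∈ 𝓖} hS hT𝓖
  have hdC : InComponent 𝓡 𝒞 d.snd :=
    (SimpleGraph.ConnectedComponent.sound d.adj.reachable).symm.trans
      (mem_componentRows.1 (h𝓖 hd𝓖)).2
  exact ⟨d.snd.1, mem_componentRows.2 ⟨d.snd.2, hdC⟩, hd𝓖', d.fst.1, hd𝓖, d.adj.symm⟩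

end Components

theorem zero_one_zero_violation_general {α : Type*} [DecidableEq α]
    (U : Finset α) (𝓡' : Finset (Finset α)) (hsub : ∀ R ∈ 𝓡', R ⊆ U)
    (𝒞 : (overlapGraph 𝓡').ConnectedComponent)
    (Z : Finset α) (hZU : Z ⊆ U)
    (hZQ : ¬ ((Z : Set α) ⊆ {c : α | ∃ R, InComponent 𝓡' 𝒞 R ∧ c ∈ R.1}))
    (σ : α → ℕ) (hσ : IsC1POrdering U 𝓡' σ)
    (a b c : α) (ha : a ∈ U) (hb : b ∈ U) (hc : c ∈ U)
    (hcona : ConstrainedCol 𝓡' 𝒞 a) (hconb : ConstrainedCol 𝓡' 𝒞 b)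
    (hconc : ConstrainedCol 𝓡' 𝒞 c)
    (hab : ¬ SameVennClass 𝓡' 𝒞 a b) (hbc : ¬ SameVennClass 𝓡' 𝒞 b c)
    (horder : σ a < σ b ∧ σ b < σ c)
    (haZ : a ∉ Z) (hbZ : b ∈ Z) (hcZ : c ∉ Z) :
    ¬ HasC1P U (insert Z 𝓡') := by
  rintro ⟨τ, hτ⟩
  set 𝓕 := componentRows 𝓡' 𝒞
  have h𝓕 : OverlapConnected 𝓕 := overlapConnected_componentRows hcona.choose_spec.1
  have h𝓕U : ∀ T ∈ 𝓕, T ⊆ U := fun T hT => hsub T (componentRows_subset hT)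
  have hτ𝓕 : IsC1POrdering U 𝓕 τ :=
    hτ.mono (componentRows_subset.trans (Finset.subset_insert Z 𝓡'))
  have hab' : ¬ VennEquiv 𝓕 a b := mt vennEquiv_componentRows_iff.1 hab
  have hbc' : ¬ VennEquiv 𝓕 b c := mt vennEquiv_componentRows_iff.1 hbc
  have haW := mem_sup_componentRows_iff.2 hcona
  have hbW := mem_sup_componentRows_iff.2 hconb
  have hcW := mem_sup_componentRows_iff.2 hconc
  have hbtw : Between τ a b c := between_of_agreeOn_or_agreeOn_rev
    (h𝓕.agreeOn_or_agreeOn_rev h𝓕U (hσ.mono componentRows_subset) hτ𝓕) ha hb hc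
    haW hbW hcW hab' hbc' horder
  obtain ⟨z, hzZ, hzW⟩ := Set.not_subset.1 hZQ
  exact not_between_of_convexIn (h𝓕.convexIn_sup h𝓕U hτ𝓕.2)
    (hτ.2 Z (Finset.mem_insert_self Z 𝓡')) ha hb hc (hZU hzZ) haW hcW
    (fun h => hzW (mem_sup_componentRows_iff.1 h)) haZ hbZ hcZ hzZ hbtw

/-- If `𝓡'` has the consecutive-ones property over `U`, `𝒞` is a
connected component of its overlap graph with union `Q`, `Z` is not a subset of `Q`,
and some consecutive-ones ordering `σ` places columns `a, b, c` of three pairwise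
distinct constrained Venn classes of `𝒞` in positions `σ a < σ b < σ c` with
`a ∉ Z`, `b ∈ Z`, `c ∉ Z` (a 0-1-0 configuration for `Z`), then `𝓡' ∪ {Z}` does not
have the consecutive-ones property. -/
theorem zero_one_zero_violation {α : Type*} [DecidableEq α]
    (U : Finset α) (𝓡' : Finset (Finset α)) (hsub : ∀ R ∈ 𝓡', R ⊆ U)
    (𝒞 : (overlapGraph 𝓡').ConnectedComponent)
    (Z : Finset α) (hZU : Z ⊆ U)
    (hZQ : ¬ ((Z : Set α) ⊆ {c : α | ∃ R, InComponent 𝓡' 𝒞 R ∧ c ∈ R.1}))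
    (σ : α → ℕ) (hσ : IsC1POrdering U 𝓡' σ)
    (a b c : α) (ha : a ∈ U) (hb : b ∈ U) (hc : c ∈ U)
    (hcona : ConstrainedCol 𝓡' 𝒞 a) (hconb : ConstrainedCol 𝓡' 𝒞 b)
    (hconc : ConstrainedCol 𝓡' 𝒞 c)
    (hab : ¬ SameVennClass 𝓡' 𝒞 a b) (hbc : ¬ SameVennClass 𝓡' 𝒞 b c)
    (hac : ¬ SameVennClass 𝓡' 𝒞 a c)
    (horder : σ a < σ b ∧ σ b < σ c)
    (haZ : a ∉ Z) (hbZ : b ∈ Z) (hcZ : c ∉ Z) :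
    ¬ HasC1P U (insert Z 𝓡') :=
  zero_one_zero_violation_general U 𝓡' hsub 𝒞 Z hZU hZQ σ hσ a b c ha hb hc hcona hconb hconc hab
    hbc horder haZ hbZ hcZ
end

section
/- Let G be a finite chordal graph with at least one vertex, let T be a clique tree of G, and let K be a maximal clique of G that is a leaf of T (a node with at most one neighbor in T). Then K contains a simplicial vertex of G. -/
/-- A vertex is *simplicial* if its neighbors are pairwise adjacent. -/
def IsSimplicial {V : Type*} (G : SimpleGraph V) (v : V) : Prop :=
  ∀ x y, G.Adj v x → G.Adj v y → x ≠ y → G.Adj x y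

/-- A graph is *chordal* if it has no induced cycle of length at least 4,
i.e., no cycle graph on `n ≥ 4` vertices embeds in it as an induced subgraph. -/
def IsChordal {V : Type*} (G : SimpleGraph V) : Prop :=
  ∀ n : ℕ, 4 ≤ n → IsEmpty (SimpleGraph.cycleGraph n ↪g G)

/-- A *clique tree* of `G` is a tree `T` on the maximal cliques of `G` such that,
for every vertex `v`, the maximal cliques containing `v` induce a connected
subgraph of `T`. -/
def IsCliqueTree {V : Type*} (G : SimpleGraph V)
    (T : SimpleGraph {K : Finset V // Maximal G.IsClique (K : Set V)}) : Prop :=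
  T.IsTree ∧ ∀ v : V, (T.induce {K | v ∈ K.1}).Connected

/-!
A leaf `K` of the clique tree has a vertex `v` lying in none of its tree neighbours (maximal
cliques are pairwise incomparable). The cliques containing `v` form a connected subtree that
contains `K` but no neighbour of `K`, so `K` is the only maximal clique containing `v`. Every
edge at `v` extends to a maximal clique, which must be `K`; hence the neighbourhood of `v` lies
in the clique `K`, and `v` is simplicial.
-/

namespace SimpleGraph

variable {α : Type*} {T : SimpleGraph α} {S : Set α} {a : α}

theorem eq_of_induce_preconnected_of_forall_adj_notMem (hS : (T.induce S).Preconnected)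
    (ha : a ∈ S) (hnbr : ∀ c, T.Adj a c → c ∉ S) {b : α} (hb : b ∈ S) : b = a := by
  have hreach := hS ⟨a, ha⟩ ⟨b, hb⟩
  rw [reachable_iff_reflTransGen, Relation.ReflTransGen.cases_head_iff] at hreach
  rcases hreach with hab | ⟨c, hac, -⟩
  · exact congrArg Subtype.val hab.symm
  · exact absurd c.2 (hnbr c.1 hac)

variable {V : Type*} (G : SimpleGraph V)

abbrev MaximalCliqueFinset : Type _ := {K : Finset V // Maximal G.IsClique (K : Set V)}

variable {G}

namespace MaximalCliqueFinset

theorem eq_of_subset {K J : G.MaximalCliqueFinset} (h : K.1 ⊆ J.1) : K = J :=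
  Subtype.ext <| Finset.coe_injective <| K.2.eq_of_subset J.2.1 (Finset.coe_subset.2 h)

theorem nonempty [Nonempty V] (K : G.MaximalCliqueFinset) : K.1.Nonempty := by
  obtain ⟨w⟩ := ‹Nonempty V›
  by_contra hK
  rw [Finset.not_nonempty_iff_eq_empty] at hK
  have hw := K.2.2 (isClique_singleton w) (by simp [hK]) (Set.mem_singleton w)
  simp [hK] at hw

theorem exists_superset [Finite V] {s : Set V} (hs : G.IsClique s) :
    ∃ M : G.MaximalCliqueFinset, s ⊆ M.1 := by
  obtain ⟨M, hsM, hM⟩ := Finite.exists_le_maximal hs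
  exact ⟨⟨(Set.toFinite M).toFinset, by rwa [Set.Finite.coe_toFinset]⟩, by simpa using hsM⟩

theorem exists_mem_forall_adj_notMem [Nonempty V] {T : SimpleGraph G.MaximalCliqueFinset}
    {K : G.MaximalCliqueFinset} (hleaf : (T.neighborSet K).Subsingleton) :
    ∃ v ∈ K.1, ∀ J, T.Adj K J → v ∉ J.1 := by
  rcases (T.neighborSet K).eq_empty_or_nonempty with hnone | ⟨K', hK'⟩
  · obtain ⟨v, hv⟩ := K.nonempty
    exact ⟨v, hv, fun J hJ _ => (hnone.subset hJ : J ∈ (∅ : Set _))⟩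
  · have hnsub : ¬ K.1 ⊆ K'.1 := fun h => T.ne_of_adj hK' (eq_of_subset h)
    obtain ⟨v, hvK, hvK'⟩ := Finset.not_subset.1 hnsub
    exact ⟨v, hvK, fun J hJ => hleaf hK' hJ ▸ hvK'⟩

end MaximalCliqueFinset

theorem isSimplicial_of_forall_maximalCliqueFinset_eq [Finite V] {K : G.MaximalCliqueFinset}
    {v : V} (huniq : ∀ L : G.MaximalCliqueFinset, v ∈ L.1 → L = K) : IsSimplicial G v := by
  have hnbr : ∀ z, G.Adj v z → z ∈ K.1 := by
    intro z hvz
    obtain ⟨M, hM⟩ := MaximalCliqueFinset.exists_superset (isClique_pair.2 fun _ => hvz)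
    have hMK : M = K := huniq M (hM (Set.mem_insert v _))
    exact hMK ▸ hM (Set.mem_insert_of_mem v rfl)
  exact fun x y hvx hvy hxy => K.2.1 (hnbr x hvx) (hnbr y hvy) hxy

end SimpleGraph

theorem leaf_clique_contains_simplicial_general {V : Type*} [Fintype V] [Nonempty V]
    (G : SimpleGraph V)
    (T : SimpleGraph {K : Finset V // Maximal G.IsClique (K : Set V)})
    (hT : IsCliqueTree G T)
    (K : {K : Finset V // Maximal G.IsClique (K : Set V)})
    (hleaf : (T.neighborSet K).Subsingleton) :
    ∃ v ∈ K.1, IsSimplicial G v := by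
  obtain ⟨v, hvK, hv⟩ := SimpleGraph.MaximalCliqueFinset.exists_mem_forall_adj_notMem hleaf
  have huniq : ∀ L : G.MaximalCliqueFinset, v ∈ L.1 → L = K := fun L hvL =>
    SimpleGraph.eq_of_induce_preconnected_of_forall_adj_notMem (hT.2 v).preconnected hvK hv hvL
  exact ⟨v, hvK, SimpleGraph.isSimplicial_of_forall_maximalCliqueFinset_eq huniq⟩

/-- If `G` is a finite chordal graph with at least one vertex,
`T` a clique tree of `G`, and `K` a maximal clique of `G` that is a leaf of `T`
(at most one neighbor in `T`), then `K` contains a simplicial vertex of `G`. -/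
theorem leaf_clique_contains_simplicial {V : Type*} [Fintype V] [Nonempty V]
    (G : SimpleGraph V) (hG : IsChordal G)
    (T : SimpleGraph {K : Finset V // Maximal G.IsClique (K : Set V)})
    (hT : IsCliqueTree G T)
    (K : {K : Finset V // Maximal G.IsClique (K : Set V)})
    (hleaf : (T.neighborSet K).Subsingleton) :
    ∃ v ∈ K.1, IsSimplicial G v :=
  leaf_clique_contains_simplicial_general G T hT K hleaf
end

section
/- Let G be a finite chordal graph, let T be a clique tree of G with at least two nodes, let K be a leaf of T, and let S be the set of simplicial vertices of G that belong to K. Then S is nonempty, the maximal cliques of the induced subgraph G − S (the subgraph induced on V(G) ∖ S) are exactly the maximal cliques of G other than K, and the tree obtained from T by deleting the leaf K is a clique tree of G − S. -/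
/-- `C` is a maximal clique of the subgraph of `G` induced on the vertex set `A`:
`C` is a clique of `G` inside `A` not properly contained in another such clique. -/
def IsMaxCliqueWithin {V : Type*} (G : SimpleGraph V) (A : Set V) (C : Finset V) : Prop :=
  (C : Set V) ⊆ A ∧ G.IsClique (C : Set V) ∧
    ∀ D : Finset V, (D : Set V) ⊆ A → G.IsClique (D : Set V) → C ⊆ D → D = C

/-!
Let `K'` be the unique neighbour of the leaf `K` in `T`. The maximal cliques containing a vertex
`v` form a subtree, and every path in `T` leaving `K` starts with `K'`; so a vertex of `K \ K'`
lies in no other maximal clique. Since every edge lies in a maximal clique, its neighbours are then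
all in `K`, and it is simplicial. Conversely a simplicial vertex `v` lies only in the maximal clique
`N[v]`, hence not in `K'`. Thus `S = K \ K'`, which is nonempty because `K ⊄ K'`. Removing `S`
leaves the other maximal cliques untouched, and what remains of `K` is contained in `K'`. Finally,
deleting a leaf from a tree, or from a subtree, keeps it connected.
-/

section

open SimpleGraph

variable {V W : Type*}

namespace SimpleGraph

abbrev MaxCliques (G : SimpleGraph V) := {K : Finset V // Maximal G.IsClique (K : Set V)}

lemma Preconnected.exists_adj_of_ne {T : SimpleGraph W} (hT : T.Preconnected) {x y : W}
    (hxy : x ≠ y) : ∃ z, T.Adj x z :=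
  let ⟨p⟩ := hT x y
  ⟨_, p.adj_snd (p.not_nil_of_ne hxy)⟩

lemma Preconnected.induce_inter_of_subsingleton_neighborSet {T : SimpleGraph W} {A s : Set W}
    (hA : (T.induce A).Preconnected) (hs : ∀ x ∈ A, x ∉ s → (T.neighborSet x).Subsingleton) :
    (T.induce (s ∩ A)).Preconnected := by
  let f : (T.induce A).induce {x | x.1 ∈ s} →g T.induce (s ∩ A) :=
    { toFun := fun x => ⟨x.1.1, x.2, x.1.2⟩, map_rel' := id }
  refine (hA.induce_of_degree_eq_one fun x hx y hy z hz => ?_).map f ?_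
  · exact Subtype.ext (hs x.1 x.2 hx hy hz)
  · rintro ⟨y, hys, hyA⟩
    exact ⟨⟨⟨y, hyA⟩, hys⟩, rfl⟩

lemma IsTree.induce_ne_of_subsingleton_neighborSet {T : SimpleGraph W} (hT : T.IsTree)
    {K K' : W} (hleaf : (T.neighborSet K).Subsingleton) (hK' : K' ≠ K) :
    (T.induce {L | L ≠ K}).IsTree where
  connected := (connected_iff _).2
    ⟨hT.connected.preconnected.induce_of_degree_eq_one fun _ hL => not_not.1 hL ▸ hleaf,
      ⟨⟨K', hK'⟩⟩⟩
  isAcyclic := hT.isAcyclic.induce _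

lemma exists_maximal_isClique_superset [Finite V] {G : SimpleGraph V} {C : Finset V}
    (hC : G.IsClique (C : Set V)) : ∃ M : Finset V, C ⊆ M ∧ Maximal G.IsClique (M : Set V) := by
  obtain ⟨M, hCM, hM⟩ := Finite.exists_le_maximal hC
  exact ⟨M.toFinite.toFinset, by simpa using hCM, by simpa using hM⟩

lemma MaxCliques.exists_mem_notMem_of_ne {G : SimpleGraph V} {K K' : G.MaxCliques}
    (h : K ≠ K') : ∃ v ∈ K.1, v ∉ K'.1 := by
  by_contra! hsub
  exact h (Subtype.ext (Finset.coe_injective (K.2.eq_of_subset K'.2.1 hsub)))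

lemma isMaxCliqueWithin_iff_of_inter_subset [Finite V] {G : SimpleGraph V} {A : Set V}
    {K K' : Finset V} (hK' : Maximal G.IsClique (K' : Set V)) (hK'K : K' ≠ K)
    (hA : ∀ L : Finset V, Maximal G.IsClique (L : Set V) → L ≠ K → (L : Set V) ⊆ A)
    (hKA : (K : Set V) ∩ A ⊆ K') (C : Finset V) :
    IsMaxCliqueWithin G A C ↔ Maximal G.IsClique (C : Set V) ∧ C ≠ K := by
  constructor
  · rintro ⟨hCA, hC, hCmax⟩
    obtain ⟨M, hCM, hM⟩ := exists_maximal_isClique_superset hC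
    by_cases hMK : M = K
    · have hCK' : C ⊆ K' := fun x hx => hKA ⟨hMK ▸ hCM hx, hCA hx⟩
      obtain rfl := hCmax K' (hA K' hK' hK'K) hK'.1 hCK'
      exact ⟨hK', hK'K⟩
    · obtain rfl := hCmax M (hA M hM hMK) hM.1 hCM
      exact ⟨hM, hMK⟩
  · rintro ⟨hC, hCK⟩
    refine ⟨hA C hC hCK, hC.1, fun D _ hD hCD => ?_⟩
    exact Finset.coe_injective (hC.eq_of_subset hD (Finset.coe_subset.2 hCD)).symm

end SimpleGraph

namespace IsSimplicial

variable {G : SimpleGraph V} {v : V}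

lemma isClique_insert_neighborSet (hv : IsSimplicial G v) :
    G.IsClique (insert v (G.neighborSet v)) :=
  IsClique.insert (fun x hx y hy hxy => hv x y hx hy hxy) fun _ hx _ => hx

lemma coe_eq_insert_neighborSet (hv : IsSimplicial G v) {K : Finset V}
    (hK : Maximal G.IsClique (K : Set V)) (hvK : v ∈ K) :
    (K : Set V) = insert v (G.neighborSet v) :=
  hK.eq_of_subset hv.isClique_insert_neighborSet fun x hx =>
    (eq_or_ne x v).imp id fun hxv => hK.1 hvK hx hxv.symm

lemma eq_of_maximal_of_mem (hv : IsSimplicial G v) {K L : Finset V}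
    (hK : Maximal G.IsClique (K : Set V)) (hvK : v ∈ K)
    (hL : Maximal G.IsClique (L : Set V)) (hvL : v ∈ L) : K = L :=
  Finset.coe_injective <|
    (hv.coe_eq_insert_neighborSet hK hvK).trans (hv.coe_eq_insert_neighborSet hL hvL).symm

end IsSimplicial

namespace IsCliqueTree

variable {G : SimpleGraph V} {T : SimpleGraph G.MaxCliques} {K K' : G.MaxCliques} {v : V}

lemma eq_of_mem_of_notMem_adj (hT : IsCliqueTree G T) (hleaf : (T.neighborSet K).Subsingleton)
    (hKK' : T.Adj K K') (hvK : v ∈ K.1) (hvK' : v ∉ K'.1) {L : G.MaxCliques} (hvL : v ∈ L.1) :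
    L = K := by
  by_contra hLK
  obtain ⟨⟨N, hvN⟩, hKN⟩ := (hT.2 v).preconnected.exists_adj_of_ne
    (x := ⟨K, hvK⟩) (y := ⟨L, hvL⟩) fun h => hLK (congrArg Subtype.val h).symm
  exact hvK' (hleaf hKN hKK' ▸ hvN)

lemma isSimplicial_of_mem_of_notMem_adj [Finite V] (hT : IsCliqueTree G T)
    (hleaf : (T.neighborSet K).Subsingleton) (hKK' : T.Adj K K') (hvK : v ∈ K.1)
    (hvK' : v ∉ K'.1) : IsSimplicial G v := by
  classical
  have hnbr : ∀ w, G.Adj v w → w ∈ K.1 := by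
    intro w hvw
    obtain ⟨M, hvwM, hM⟩ :=
      exists_maximal_isClique_superset (C := {v, w}) (by simpa using fun _ => hvw)
    have hMK : (⟨M, hM⟩ : G.MaxCliques) = K :=
      hT.eq_of_mem_of_notMem_adj hleaf hKK' hvK hvK' (hvwM (by simp))
    rw [← hMK]
    exact hvwM (by simp)
  exact fun x y hx hy hxy => K.2.1 (hnbr x hx) (hnbr y hy) hxy

lemma setOf_mem_isSimplicial_eq [Finite V] (hT : IsCliqueTree G T)
    (hleaf : (T.neighborSet K).Subsingleton) (hKK' : T.Adj K K') :
    {v | v ∈ K.1 ∧ IsSimplicial G v} = {v | v ∈ K.1 ∧ v ∉ K'.1} := by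
  ext v
  refine and_congr_right fun hvK =>
    ⟨fun hv hvK' => hKK'.ne ?_, hT.isSimplicial_of_mem_of_notMem_adj hleaf hKK' hvK⟩
  exact Subtype.ext (hv.eq_of_maximal_of_mem K.2 hvK K'.2 hvK')

lemma isMaxCliqueWithin_iff [Finite V] (hT : IsCliqueTree G T)
    (hleaf : (T.neighborSet K).Subsingleton) (hKK' : T.Adj K K') (C : Finset V) :
    IsMaxCliqueWithin G {v | v ∉ {v | v ∈ K.1 ∧ v ∉ K'.1}} C ↔
      Maximal G.IsClique (C : Set V) ∧ C ≠ K.1 := by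
  refine isMaxCliqueWithin_iff_of_inter_subset K'.2 (fun h => hKK'.ne' (Subtype.ext h)) ?_ ?_ C
  · intro L hL hLK v hvL hvS
    exact hLK (congrArg Subtype.val (hT.eq_of_mem_of_notMem_adj hleaf hKK' hvS.1 hvS.2
      (L := ⟨L, hL⟩) hvL))
  · exact fun v ⟨hvK, hvS⟩ => not_and_not_right.1 hvS hvK

lemma connected_induce_ne_mem (hT : IsCliqueTree G T) (hleaf : (T.neighborSet K).Subsingleton)
    (hKK' : T.Adj K K') (hv : v ∉ {v | v ∈ K.1 ∧ v ∉ K'.1}) :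
    (T.induce {L | L ≠ K ∧ v ∈ L.1}).Connected := by
  refine (connected_iff _).2 ⟨(hT.2 v).preconnected.induce_inter_of_subsingleton_neighborSet
    fun _ _ hL => not_not.1 hL ▸ hleaf, ?_⟩
  by_cases hvK : v ∈ K.1
  · exact ⟨⟨K', hKK'.ne', not_and_not_right.1 hv hvK⟩⟩
  · obtain ⟨⟨L, hvL⟩⟩ := (hT.2 v).nonempty
    exact ⟨⟨L, fun h => hvK (h ▸ hvL), hvL⟩⟩

end IsCliqueTree

end

theorem shrink_clique_tree_general {V : Type*} [Fintype V]
    (G : SimpleGraph V)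
    (T : SimpleGraph {K : Finset V // Maximal G.IsClique (K : Set V)})
    (hT : IsCliqueTree G T)
    (K : {K : Finset V // Maximal G.IsClique (K : Set V)})
    (htwo : ∃ K' : {K : Finset V // Maximal G.IsClique (K : Set V)}, K' ≠ K)
    (hleaf : (T.neighborSet K).Subsingleton)
    (S : Set V) (hS : S = {v : V | v ∈ K.1 ∧ IsSimplicial G v}) :
    S.Nonempty ∧
      (∀ C : Finset V,
        IsMaxCliqueWithin G {v : V | v ∉ S} C ↔ (Maximal G.IsClique (C : Set V) ∧ C ≠ K.1)) ∧
      (T.induce {L | L ≠ K}).IsTree ∧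
      (∀ v : V, v ∉ S → (T.induce {L | L ≠ K ∧ v ∈ L.1}).Connected) := by
  obtain ⟨K', hKK'⟩ : ∃ K', T.Adj K K' :=
    let ⟨_, hK₀⟩ := htwo
    hT.1.connected.preconnected.exists_adj_of_ne hK₀.symm
  subst hS
  rw [hT.setOf_mem_isSimplicial_eq hleaf hKK']
  exact ⟨SimpleGraph.MaxCliques.exists_mem_notMem_of_ne hKK'.ne,
    hT.isMaxCliqueWithin_iff hleaf hKK',
    hT.1.induce_ne_of_subsingleton_neighborSet hleaf hKK'.ne',
    fun _ hv => hT.connected_induce_ne_mem hleaf hKK' hv⟩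

/-- Let `G` be a finite chordal graph, `T` a clique tree of `G` with at
least two nodes, `K` a leaf of `T`, and `S` the set of simplicial vertices of `G` lying
in `K`.  Then `S` is nonempty; the maximal cliques of `G − S` are exactly the maximal
cliques of `G` other than `K`; and deleting the leaf `K` from `T` yields a clique tree
of `G − S`. -/
theorem shrink_clique_tree {V : Type*} [Fintype V]
    (G : SimpleGraph V) (hG : IsChordal G)
    (T : SimpleGraph {K : Finset V // Maximal G.IsClique (K : Set V)})
    (hT : IsCliqueTree G T)
    (K : {K : Finset V // Maximal G.IsClique (K : Set V)})
    (htwo : ∃ K' : {K : Finset V // Maximal G.IsClique (K : Set V)}, K' ≠ K)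
    (hleaf : (T.neighborSet K).Subsingleton)
    (S : Set V) (hS : S = {v : V | v ∈ K.1 ∧ IsSimplicial G v}) :
    S.Nonempty ∧
      (∀ C : Finset V,
        IsMaxCliqueWithin G {v : V | v ∉ S} C ↔ (Maximal G.IsClique (C : Set V) ∧ C ≠ K.1)) ∧
      (T.induce {L | L ≠ K}).IsTree ∧
      (∀ v : V, v ∉ S → (T.induce {L | L ≠ K ∧ v ∈ L.1}).Connected) :=
  shrink_clique_tree_general G T hT K htwo hleaf S hS
end

section
/- Let G be a finite chordal graph, let T be a clique tree of G, let 𝒦 be a finite set of maximal cliques of G, and let C ∈ 𝒦. Suppose every member of 𝒦 ∖ {C} contains a vertex that is not in C, and the subgraph of G induced on (⋃𝒦) ∖ C is connected and nonempty. Then for every pair of distinct cliques K_1, K_2 ∈ 𝒦 ∖ {C}, the clique C does not lie on the unique path in T between the nodes K_1 and K_2. -/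
/-!
Join two vertices `v₁ ∈ K₁ \ C` and `v₂ ∈ K₂ \ C` by a walk in `G` avoiding `C`. Each edge of
that walk lies in some maximal clique, and consecutive such cliques share a vertex outside `C`,
so the clique-tree property links them by a walk in `T` through cliques containing that vertex,
none of which is `C`. Concatenating gives a walk from `K₁` to `K₂` in `T` missing `C`, and its
underlying path is the unique `K₁`–`K₂` path of the tree.
-/

namespace SimpleGraph

variable {V : Type*} {G : SimpleGraph V}

lemma IsClique.exists_maximal_finset_superset [Finite V] {s : Set V} (hs : G.IsClique s) :
    ∃ K : {K : Finset V // Maximal G.IsClique (K : Set V)}, s ⊆ K.1 := by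
  obtain ⟨M, hsM, hM⟩ := Finite.exists_le_maximal hs
  have : Fintype M := Fintype.ofFinite M
  exact ⟨⟨M.toFinset, by simpa using hM⟩, by simpa using hsM⟩

variable {T : SimpleGraph {K : Finset V // Maximal G.IsClique (K : Set V)}}

lemma exists_walk_forall_support_mem (hT : ∀ v : V, (T.induce {K | v ∈ K.1}).Connected) {v : V}
    {Ka Kb : {K : Finset V // Maximal G.IsClique (K : Set V)}} (ha : v ∈ Ka.1) (hb : v ∈ Kb.1) :
    ∃ q : T.Walk Ka Kb, ∀ K ∈ q.support, v ∈ K.1 := by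
  obtain ⟨w⟩ := hT v ⟨Ka, ha⟩ ⟨Kb, hb⟩
  refine ⟨w.map (Embedding.induce _).toHom, fun K hK => ?_⟩
  obtain ⟨K', -, rfl⟩ := List.mem_map.1 (Walk.support_map _ w ▸ hK)
  exact K'.2

lemma exists_walk_forall_support_meets [Finite V]
    (hT : ∀ v : V, (T.induce {K | v ∈ K.1}).Connected) {S : Set V} {a b : S}
    (w : (G.induce S).Walk a b) {Ka Kb : {K : Finset V // Maximal G.IsClique (K : Set V)}}
    (ha : a.1 ∈ Ka.1) (hb : b.1 ∈ Kb.1) :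
    ∃ q : T.Walk Ka Kb, ∀ K ∈ q.support, ∃ v ∈ S, v ∈ K.1 := by
  induction w generalizing Ka with
  | nil =>
    obtain ⟨q, hq⟩ := exists_walk_forall_support_mem hT ha hb
    exact ⟨q, fun K hK => ⟨_, Subtype.prop _, hq K hK⟩⟩
  | @cons a a' b hadj w ih =>
    obtain ⟨K', hK'⟩ := (isClique_pair.2 fun _ => induce_adj.1 hadj).exists_maximal_finset_superset
    obtain ⟨q₁, hq₁⟩ := exists_walk_forall_support_mem hT ha (hK' (Set.mem_insert _ _))
    obtain ⟨q₂, hq₂⟩ := ih (hK' (Set.mem_insert_of_mem _ rfl)) hb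
    refine ⟨q₁.append q₂, fun K hK => ?_⟩
    rcases (Walk.mem_support_append_iff _ _).1 hK with hK | hK
    · exact ⟨a, a.2, hq₁ K hK⟩
    · exact hq₂ K hK

end SimpleGraph

theorem clique_not_on_path_general {V : Type*} [Fintype V]
    (G : SimpleGraph V)
    (T : SimpleGraph {K : Finset V // Maximal G.IsClique (K : Set V)})
    (hT : IsCliqueTree G T)
    (𝒦 : Set {K : Finset V // Maximal G.IsClique (K : Set V)})
    (C : {K : Finset V // Maximal G.IsClique (K : Set V)})
    (hvert : ∀ K ∈ 𝒦, K ≠ C → ∃ v ∈ K.1, v ∉ C.1)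
    (hconn : (G.induce {v : V | (∃ K ∈ 𝒦, v ∈ K.1) ∧ v ∉ C.1}).Connected) :
    ∀ K₁ ∈ 𝒦, ∀ K₂ ∈ 𝒦, K₁ ≠ C → K₂ ≠ C → K₁ ≠ K₂ →
      ∀ p : T.Walk K₁ K₂, p.IsPath → C ∉ p.support := by
  classical
  intro K₁ h₁ K₂ h₂ hne₁ hne₂ _ p hp hCp
  obtain ⟨v₁, hv₁, hv₁C⟩ := hvert K₁ h₁ hne₁
  obtain ⟨v₂, hv₂, hv₂C⟩ := hvert K₂ h₂ hne₂
  obtain ⟨w⟩ := hconn ⟨v₁, ⟨K₁, h₁, hv₁⟩, hv₁C⟩ ⟨v₂, ⟨K₂, h₂, hv₂⟩, hv₂C⟩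
  obtain ⟨q, hq⟩ := SimpleGraph.exists_walk_forall_support_meets hT.2 w hv₁ hv₂
  have hpq : (⟨p, hp⟩ : T.Path K₁ K₂) = q.toPath :=
    (hT.1.isAcyclic.subsingleton_path K₁ K₂).elim _ _
  obtain ⟨v, hvS, hvC⟩ :=
    hq C (SimpleGraph.Walk.support_toPath_subset_support q (hpq ▸ hCp))
  exact hvS.2 hvC

/-- Let `G` be a finite chordal graph, `T` a clique tree of `G`,
`𝒦` a set of maximal cliques of `G`, and `C ∈ 𝒦`.  If every member of `𝒦 \ {C}` has a
vertex outside `C`, and the subgraph of `G` induced on `(⋃𝒦) \ C` is connected (hence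
nonempty), then `C` does not lie on the unique path in `T` between any two distinct
members of `𝒦 \ {C}`. -/
theorem clique_not_on_path {V : Type*} [Fintype V]
    (G : SimpleGraph V) (hG : IsChordal G)
    (T : SimpleGraph {K : Finset V // Maximal G.IsClique (K : Set V)})
    (hT : IsCliqueTree G T)
    (𝒦 : Set {K : Finset V // Maximal G.IsClique (K : Set V)})
    (C : {K : Finset V // Maximal G.IsClique (K : Set V)}) (hC : C ∈ 𝒦)
    (hvert : ∀ K ∈ 𝒦, K ≠ C → ∃ v ∈ K.1, v ∉ C.1)
    (hconn : (G.induce {v : V | (∃ K ∈ 𝒦, v ∈ K.1) ∧ v ∉ C.1}).Connected) :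
    ∀ K₁ ∈ 𝒦, ∀ K₂ ∈ 𝒦, K₁ ≠ C → K₂ ≠ C → K₁ ≠ K₂ →
      ∀ p : T.Walk K₁ K₂, p.IsPath → C ∉ p.support :=
  clique_not_on_path_general G T hT 𝒦 C hvert hconn
end
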